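/- For every integer n ≥ 1, the multiplicative gain satisfies 0 ≤ χ_n ≤ 1 − 2^n̂/(n + 1) if n is odd, 0 ≤ χ_n ≤ 1 − 2^n̂/n if n is even, and in either case χ_n < 1/2. -/

import Mathlib

/-- A finite subset of the hypercube `Q_n = (ZMod 2)^n` is dominating if every point of the
hypercube is at Hamming distance at most 1 from some element of the subset. -/
def IsDominating {n : ℕ} (Δ : Finset (Fin n → ZMod 2)) : Prop :=
  ∀ y : Fin n → ZMod 2, ∃ x ∈ Δ, hammingDist x y ≤ 1

/-- The minimal domination number `γ_n` of the `n`-dimensional hypercube. -/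
noncomputable def gamma (n : ℕ) : ℕ :=
  sInf {k | ∃ Δ : Finset (Fin n → ZMod 2), IsDominating Δ ∧ Δ.card = k}

/-- The multiplicative gain `χ_n = 1 - γ_n · 2^(n̂ - n)`, where `n̂ = ⌊log₂ (n+1)⌋`. -/
noncomputable def chi (n : ℕ) : ℚ :=
  1 - (gamma n : ℚ) * (2 : ℚ) ^ ((Nat.log 2 (n + 1) : ℤ) - (n : ℤ))

/-!
The kernel of a linear map `(ZMod 2)^n → (ZMod 2)^n̂` whose columns run through every nonzero
vector (a shortened Hamming code) is dominating, so `γ_n ≤ 2^(n - n̂)`, i.e. `χ_n ≥ 0`.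
Conversely the balls of radius one, of size `n + 1`, around a dominating set cover `Q_n`, so
`2^n ≤ (n + 1) γ_n`; with `n + 1 < 2^(n̂ + 1)` this gives both the odd bound and `χ_n < 1/2`.

For even `n` the count improves. Two distinct balls meet in an even number of points (translation
by `c + v` is a fixed-point-free involution of `B(c) ∩ B(v)`), so a non-codeword `v` sees an even
total coverage over its odd-sized ball `B(v)`, hence at least `n + 2`. Double counting over
non-codewords, with `f (n + 1 - f) ≤ 2 + (n - 2) f` for the coverage `f ≥ 1` of a point, gives
`2^n ≤ n γ_n`.
-/
open Finset

section HammingBall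

variable {ι : Type*} [Fintype ι] [DecidableEq ι]

lemma hammingNorm_single {β : Type*} [Zero β] [DecidableEq β] {a : β} (ha : a ≠ 0) (i : ι) :
    hammingNorm (Pi.single i a : ι → β) = 1 := by
  rw [hammingNorm, card_eq_one]
  exact ⟨i, by ext j; by_cases h : j = i <;> simp [h, ha]⟩

lemma hammingNorm_le_one_iff {w : ι → ZMod 2} :
    hammingNorm w ≤ 1 ↔ w = 0 ∨ ∃ i, w = Pi.single i 1 := by
  refine ⟨fun h => ?_, ?_⟩
  · rw [Nat.le_one_iff_eq_zero_or_eq_one, hammingNorm_eq_zero] at h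
    refine h.imp_right fun h1 => ?_
    obtain ⟨i, hi⟩ := card_eq_one.mp h1
    have hsupp : ∀ j, w j ≠ 0 ↔ j = i := fun j => by simpa using congrArg (j ∈ ·) hi
    refine ⟨i, funext fun j => ?_⟩
    by_cases hj : j = i
    · have hne : ∀ a : ZMod 2, a ≠ 0 → a = 1 := by decide
      simpa [hj] using hne _ ((hsupp j).mpr hj)
    · simpa [hj] using (hsupp j).not.mpr hj
  · rintro (rfl | ⟨i, rfl⟩)
    · simp
    · exact (hammingNorm_single one_ne_zero i).le

def hammingBall (v : ι → ZMod 2) : Finset (ι → ZMod 2) :=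
  {u | hammingDist u v ≤ 1}

lemma mem_hammingBall {u v : ι → ZMod 2} : u ∈ hammingBall v ↔ hammingDist u v ≤ 1 := by
  simp [hammingBall]

lemma mem_hammingBall_comm {u v : ι → ZMod 2} : u ∈ hammingBall v ↔ v ∈ hammingBall u := by
  rw [mem_hammingBall, mem_hammingBall, hammingDist_comm]

lemma hammingDist_add_single_one (v : ι → ZMod 2) (i : ι) :
    hammingDist (v + Pi.single i 1) v = 1 := by
  rw [hammingDist_comm, hammingDist_eq_hammingNorm, neg_add_cancel_left,
    hammingNorm_single one_ne_zero]

lemma hammingBall_eq_insert_image (v : ι → ZMod 2) :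
    hammingBall v = insert v (univ.image fun i => v + Pi.single i 1) := by
  ext u
  rw [mem_hammingBall, hammingDist_comm, hammingDist_eq_hammingNorm, hammingNorm_le_one_iff]
  simp [eq_neg_add_iff_add_eq, neg_add_eq_zero, eq_comm]

lemma card_hammingBall (v : ι → ZMod 2) : #(hammingBall v) = Fintype.card ι + 1 := by
  rw [hammingBall_eq_insert_image, card_insert_of_notMem, card_image_of_injective, card_univ]
  · intro i j hij
    simpa [Pi.single_apply] using congrFun (add_left_cancel hij) i
  · simp [funext_iff, Pi.single_apply]

omit [DecidableEq ι] in
lemma hammingDist_add_right {β : Type*} [AddGroup β] [DecidableEq β] (x y z : ι → β) :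
    hammingDist (x + z) (y + z) = hammingDist x y := by
  simp [hammingDist]

lemma even_card_hammingBall_inter {c v : ι → ZMod 2} (hcv : c ≠ v) :
    Even #(hammingBall c ∩ hammingBall v) := by
  have hw : c + v ≠ 0 := by rwa [← ZModModule.sub_eq_add, sub_ne_zero]
  have hcancel : ∀ x y : ι → ZMod 2, x + (x + y) = y := fun x y => by
    rw [← add_assoc, ZModModule.add_self, zero_add]
  rw [← ZMod.natCast_eq_zero_iff_even, card_eq_sum_ones, Nat.cast_sum, Nat.cast_one]
  refine sum_involution (fun u _ => u + (c + v)) (fun _ _ => ZModModule.add_self 1)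
    (fun u _ _ => by simpa using hw) (fun u hu => ?_)
    (fun u _ => by rw [add_assoc, ZModModule.add_self, add_zero])
  simp only [mem_inter, mem_hammingBall] at hu ⊢
  have hc := hammingDist_add_right u v (c + v)
  have hv := hammingDist_add_right u c (c + v)
  rw [add_comm c v, hcancel, add_comm v c] at hc
  rw [hcancel] at hv
  exact ⟨hc ▸ hu.2, hv ▸ hu.1⟩

lemma sum_card_hammingBall_inter_comm (U V : Finset (ι → ZMod 2)) :
    ∑ u ∈ U, #(hammingBall u ∩ V) = ∑ v ∈ V, #(hammingBall v ∩ U) := by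
  simp only [card_eq_sum_ones]
  exact sum_comm' fun u v => by simp only [mem_inter, mem_hammingBall_comm (u := u)]; tauto

lemma sum_sum_hammingBall (V : Finset (ι → ZMod 2)) (f : (ι → ZMod 2) → ℕ) :
    ∑ v ∈ V, ∑ u ∈ hammingBall v, f u = ∑ u, #(hammingBall u ∩ V) * f u := by
  rw [sum_comm' (t' := univ) (s' := fun u => hammingBall u ∩ V) fun v u => by
    simp only [mem_inter, mem_hammingBall_comm (u := v), mem_univ]; tauto]
  simp

def coverCount (Δ : Finset (ι → ZMod 2)) (u : ι → ZMod 2) : ℕ := #(hammingBall u ∩ Δ)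

lemma coverCount_add_card_inter_compl (Δ : Finset (ι → ZMod 2)) (u : ι → ZMod 2) :
    coverCount Δ u + #(hammingBall u ∩ Δᶜ) = Fintype.card ι + 1 := by
  rw [coverCount, ← sdiff_eq_inter_compl, card_inter_add_card_sdiff, card_hammingBall]

lemma sum_coverCount (Δ : Finset (ι → ZMod 2)) :
    ∑ u, coverCount Δ u = #Δ * (Fintype.card ι + 1) := by
  simpa [card_hammingBall, coverCount] using (sum_sum_hammingBall Δ fun _ => 1).symm

end HammingBall

section LowerBounds

variable {n : ℕ} {Δ : Finset (Fin n → ZMod 2)}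

lemma IsDominating.coverCount_pos (hΔ : IsDominating Δ) (u : Fin n → ZMod 2) :
    0 < coverCount Δ u := by
  obtain ⟨c, hc, hcu⟩ := hΔ u
  exact card_pos.mpr ⟨c, mem_inter.mpr ⟨mem_hammingBall.mpr hcu, hc⟩⟩

lemma IsDominating.two_pow_le_succ_mul_card (hΔ : IsDominating Δ) : 2 ^ n ≤ (n + 1) * #Δ := by
  calc 2 ^ n = #(univ : Finset (Fin n → ZMod 2)) • 1 := by simp
    _ ≤ ∑ u, coverCount Δ u := card_nsmul_le_sum _ _ _ fun u _ => hΔ.coverCount_pos u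
    _ = (n + 1) * #Δ := by rw [sum_coverCount, Fintype.card_fin, mul_comm]

lemma IsDominating.add_two_le_sum_coverCount (hΔ : IsDominating Δ) (hn : Even n)
    {v : Fin n → ZMod 2} (hv : v ∉ Δ) :
    n + 2 ≤ ∑ u ∈ hammingBall v, coverCount Δ u := by
  have hle : n + 1 ≤ ∑ u ∈ hammingBall v, coverCount Δ u := by
    have := card_nsmul_le_sum (hammingBall v) _ 1 fun u _ => hΔ.coverCount_pos u
    rwa [card_hammingBall, Fintype.card_fin, smul_eq_mul, mul_one] at this
  have heven : Even (∑ u ∈ hammingBall v, coverCount Δ u) := by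
    simp only [coverCount]
    rw [sum_card_hammingBall_inter_comm]
    exact even_sum _ fun c hc => even_card_hammingBall_inter (ne_of_mem_of_not_mem hc hv)
  obtain ⟨a, ha⟩ := heven
  obtain ⟨b, hb⟩ := hn
  omega

/-- `(f - 1) (f - 2) ≥ 0`, written with `g = n + 1 - f` so that no subtraction occurs. -/
lemma mul_add_two_mul_le_of_add_eq_succ {f g n : ℕ} (h : f + g = n + 1) :
    g * f + 2 * f ≤ n * f + 2 := by
  rcases le_or_gt f 1 with hf | hf <;> nlinarith

lemma IsDominating.two_pow_le_mul_card (hΔ : IsDominating Δ) (hn0 : n ≠ 0) (hn : Even n) :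
    2 ^ n ≤ n * #Δ := by
  have hcard : #Δᶜ + #Δ = 2 ^ n := by simp [card_compl_add_card]
  have hlower : (n + 2) * #Δᶜ ≤ ∑ v ∈ Δᶜ, ∑ u ∈ hammingBall v, coverCount Δ u := by
    simpa [mul_comm] using card_nsmul_le_sum Δᶜ _ _ fun v hv =>
      hΔ.add_two_le_sum_coverCount hn (mem_compl.mp hv)
  have hsum := sum_coverCount Δ
  rw [Fintype.card_fin] at hsum
  have hupper :
      ∑ v ∈ Δᶜ, ∑ u ∈ hammingBall v, coverCount Δ u + 2 * ∑ u, coverCount Δ u ≤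
        n * ∑ u, coverCount Δ u + 2 * 2 ^ n := by
    rw [sum_sum_hammingBall, mul_sum, mul_sum, ← sum_add_distrib]
    calc _ ≤ ∑ u : Fin n → ZMod 2, (n * coverCount Δ u + 2) := sum_le_sum fun u _ =>
          mul_add_two_mul_le_of_add_eq_succ <| by
            simpa using coverCount_add_card_inter_compl Δ u
      _ = _ := by simp [sum_add_distrib, mul_comm]
  rw [hsum] at hupper
  have key : n * 2 ^ n ≤ n * (n * #Δ) := by nlinarith
  exact Nat.le_of_mul_le_mul_left key (Nat.pos_of_ne_zero hn0)

end LowerBounds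

section Construction

lemma exists_forall_ne_zero_mem_range {V : Type*} [Zero V] [Fintype V] [DecidableEq V] {n : ℕ}
    (h : Fintype.card V ≤ n + 1) : ∃ v : Fin n → V, ∀ t ≠ 0, t ∈ Set.range v := by
  have hcard : Fintype.card {t : V // t ≠ 0} ≤ Fintype.card (Fin n) := by
    rw [Fintype.card_subtype_compl, Fintype.card_fin, Fintype.card_subtype_eq]; omega
  obtain ⟨e⟩ := Function.Embedding.nonempty_of_card_le hcard
  exact ⟨Function.extend e Subtype.val 0,
    fun t ht => ⟨e ⟨t, ht⟩, e.injective.extend_apply _ _ _⟩⟩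

variable {n k : ℕ}

lemma card_ker_eq_two_pow {φ : (Fin n → ZMod 2) →ₗ[ZMod 2] (Fin k → ZMod 2)}
    (hφ : Function.Surjective φ) : #{x | φ x = 0} = 2 ^ (n - k) := by
  have hrank := LinearMap.finrank_range_add_finrank_ker φ
  rw [LinearMap.range_eq_top.mpr hφ, finrank_top, Module.finrank_fin_fun,
    Module.finrank_fin_fun] at hrank
  classical
  rw [← Fintype.card_subtype,
    Fintype.card_congr (Equiv.subtypeEquivRight fun x => LinearMap.mem_ker.symm),
    Module.card_eq_pow_finrank (K := ZMod 2), ZMod.card]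
  congr 1; omega

lemma isDominating_ker_linearCombination {v : Fin n → Fin k → ZMod 2}
    (hv : ∀ t ≠ 0, t ∈ Set.range v) :
    IsDominating {x | Fintype.linearCombination (ZMod 2) v x = 0} := by
  intro y
  by_cases hy : Fintype.linearCombination (ZMod 2) v y = 0
  · exact ⟨y, by simpa using hy, by simp⟩
  · obtain ⟨i, hi⟩ := hv _ hy
    refine ⟨y + Pi.single i 1, ?_, (hammingDist_add_single_one y i).le⟩
    simp [hi, ZModModule.add_self]

lemma surjective_linearCombination {v : Fin n → Fin k → ZMod 2}
    (hv : ∀ t ≠ 0, t ∈ Set.range v) :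
    Function.Surjective (Fintype.linearCombination (ZMod 2) v) := by
  intro t
  by_cases ht : t = 0
  · exact ⟨0, by simp [ht]⟩
  · obtain ⟨i, hi⟩ := hv t ht
    exact ⟨Pi.single i 1, by simp [hi]⟩

lemma exists_isDominating_card_eq (hk : 2 ^ k ≤ n + 1) :
    ∃ Δ : Finset (Fin n → ZMod 2), IsDominating Δ ∧ #Δ = 2 ^ (n - k) := by
  obtain ⟨v, hv⟩ := exists_forall_ne_zero_mem_range (V := Fin k → ZMod 2) (by simpa using hk)
  exact ⟨_, isDominating_ker_linearCombination hv,
    card_ker_eq_two_pow (surjective_linearCombination hv)⟩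

end Construction

section DominationNumber

variable {n : ℕ}

lemma gamma_le_card {Δ : Finset (Fin n → ZMod 2)} (hΔ : IsDominating Δ) : gamma n ≤ #Δ :=
  Nat.sInf_le ⟨Δ, hΔ, rfl⟩

lemma exists_isDominating_card_eq_gamma (n : ℕ) :
    ∃ Δ : Finset (Fin n → ZMod 2), IsDominating Δ ∧ #Δ = gamma n := by
  have huniv : IsDominating (univ : Finset (Fin n → ZMod 2)) := by
    intro y
    exact ⟨y, mem_univ y, by simp⟩
  exact Nat.sInf_mem (s := {k | ∃ Δ : Finset (Fin n → ZMod 2), IsDominating Δ ∧ #Δ = k})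
    ⟨_, univ, huniv, rfl⟩

lemma gamma_mul_two_pow_log_le (n : ℕ) : gamma n * 2 ^ Nat.log 2 (n + 1) ≤ 2 ^ n := by
  have hk : 2 ^ Nat.log 2 (n + 1) ≤ n + 1 := Nat.pow_log_le_self 2 n.succ_ne_zero
  have hkn : Nat.log 2 (n + 1) ≤ n := Nat.lt_succ_iff.mp (Nat.log_lt_self 2 n.succ_ne_zero)
  obtain ⟨Δ, hΔ, hcard⟩ := exists_isDominating_card_eq hk
  calc gamma n * 2 ^ Nat.log 2 (n + 1) ≤ 2 ^ (n - Nat.log 2 (n + 1)) * 2 ^ Nat.log 2 (n + 1) :=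
        Nat.mul_le_mul_right _ (hcard ▸ gamma_le_card hΔ)
    _ = 2 ^ n := by rw [← pow_add, Nat.sub_add_cancel hkn]

lemma two_pow_le_succ_mul_gamma (n : ℕ) : 2 ^ n ≤ (n + 1) * gamma n := by
  obtain ⟨Δ, hΔ, hcard⟩ := exists_isDominating_card_eq_gamma n
  exact hcard ▸ hΔ.two_pow_le_succ_mul_card

lemma two_pow_le_mul_gamma (hn0 : n ≠ 0) (hn : Even n) : 2 ^ n ≤ n * gamma n := by
  obtain ⟨Δ, hΔ, hcard⟩ := exists_isDominating_card_eq_gamma n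
  exact hcard ▸ hΔ.two_pow_le_mul_card hn0 hn

lemma chi_eq (n : ℕ) :
    chi n = 1 - (gamma n * 2 ^ Nat.log 2 (n + 1) : ℕ) / (2 ^ n : ℕ) := by
  rw [chi, zpow_sub₀ two_ne_zero, zpow_natCast, zpow_natCast]
  push_cast; ring

lemma chi_nonneg (n : ℕ) : 0 ≤ chi n := by
  rw [chi_eq, sub_nonneg, div_le_one (by positivity)]
  exact_mod_cast gamma_mul_two_pow_log_le n

lemma chi_le_of_two_pow_le {m : ℕ} (hm : 0 < m) (h : 2 ^ n ≤ m * gamma n) :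
    chi n ≤ 1 - (2 : ℚ) ^ Nat.log 2 (n + 1) / m := by
  rw [chi_eq, sub_le_sub_iff_left, div_le_div_iff₀ (by positivity) (by positivity)]
  push_cast
  have h' : (2 : ℚ) ^ n ≤ m * gamma n := by exact_mod_cast h
  nlinarith [pow_pos (two_pos (α := ℚ)) (Nat.log 2 (n + 1))]

lemma chi_lt_half (n : ℕ) : chi n < 1 / 2 := by
  have hsphere := two_pow_le_succ_mul_gamma n
  have hlog : n + 1 < 2 * 2 ^ Nat.log 2 (n + 1) := by
    rw [← pow_succ']; exact Nat.lt_pow_succ_log_self one_lt_two _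
  have hgamma : 0 < gamma n := Nat.pos_of_ne_zero fun h => by simp [h] at hsphere
  have hlt : 2 ^ n < 2 * (gamma n * 2 ^ Nat.log 2 (n + 1)) := by nlinarith
  have hlt' : ((2 ^ n : ℕ) : ℚ) < 2 * (gamma n * 2 ^ Nat.log 2 (n + 1) : ℕ) := by
    exact_mod_cast hlt
  rw [chi_eq, sub_lt_comm, lt_div_iff₀ (by positivity)]
  linarith

end DominationNumber

/-- For `n ≥ 1`: `0 ≤ χ_n`; `χ_n ≤ 1 - 2^n̂/(n+1)` for `n` odd;
`χ_n ≤ 1 - 2^n̂/n` for `n` even; and in either case `χ_n < 1/2`. -/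
theorem stmt_9 (n : ℕ) (hn : 1 ≤ n) :
    0 ≤ chi n ∧
    (Odd n → chi n ≤ 1 - (2 : ℚ) ^ Nat.log 2 (n + 1) / ((n : ℚ) + 1)) ∧
    (Even n → chi n ≤ 1 - (2 : ℚ) ^ Nat.log 2 (n + 1) / (n : ℚ)) ∧
    chi n < 1 / 2 := by
  refine ⟨chi_nonneg n, fun _ => ?_, fun hE => ?_, chi_lt_half n⟩
  · exact_mod_cast chi_le_of_two_pow_le n.succ_pos (two_pow_le_succ_mul_gamma n)
  · exact chi_le_of_two_pow_le (by omega) (two_pow_le_mul_gamma (by omega) hE)
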